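/- arXiv:1710.10404 — 4 statements merged into one kernel-verified Lean document; each statement's English description precedes it below -/
import Mathlib

section
/- Let C be a nonnegative square matrix indexed by a finite set I, and let m be a pseudo-metric on I. Suppose max_{i∈I} Σ_{j∈I} e^{m(i,j)} C_{ij} ≤ d < 1. Then the matrix D = Σ_{n=0}^∞ C^n = (I − C)^{-1} satisfies max_{i∈I} Σ_{j∈I} e^{m(i,j)} D_{ij} ≤ 1/(1−d). -/
/-! For nonnegative matrices the weighted row sums `∑ j, exp (m i j) * A i j` are
submultiplicative, since `exp (m i j) ≤ exp (m i k) * exp (m k j)` by the triangle inequality.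
Hence the weighted row sums of `C ^ n` are at most `d ^ n`. This bounds every entry of `C ^ n`
by a multiple of `d ^ n`, so the Neumann series converges, and summing the geometric bound
gives `1 / (1 - d)`. -/

open Finset

namespace Matrix

variable {I : Type*} [Fintype I]

noncomputable def expWeightedRowSum (m : I → I → ℝ) (A : Matrix I I ℝ) (i : I) : ℝ :=
  ∑ j, Real.exp (m i j) * A i j

variable {m : I → I → ℝ}

theorem exp_mul_apply_le_expWeightedRowSum {A : Matrix I I ℝ} (hA : ∀ i j, 0 ≤ A i j)
    (i j : I) :
    Real.exp (m i j) * A i j ≤ expWeightedRowSum m A i :=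
  single_le_sum (f := fun j => Real.exp (m i j) * A i j)
    (fun k _ => mul_nonneg (Real.exp_pos _).le (hA i k)) (mem_univ j)

theorem expWeightedRowSum_one [DecidableEq I] (hm0 : ∀ i, m i i = 0) (i : I) :
    expWeightedRowSum m 1 i = 1 := by
  simp [expWeightedRowSum, one_apply, hm0]

theorem expWeightedRowSum_mul_le (hmtri : ∀ i j k, m i k ≤ m i j + m j k)
    {A B : Matrix I I ℝ} (hA : ∀ i j, 0 ≤ A i j) (hB : ∀ i j, 0 ≤ B i j) (i : I) :
    expWeightedRowSum m (A * B) i ≤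
      ∑ k, Real.exp (m i k) * A i k * expWeightedRowSum m B k := by
  simp only [expWeightedRowSum, mul_apply, mul_sum]
  rw [sum_comm]
  refine sum_le_sum fun k _ => sum_le_sum fun j _ => ?_
  have hexp : Real.exp (m i j) ≤ Real.exp (m i k) * Real.exp (m k j) := by
    rw [← Real.exp_add]
    exact Real.exp_le_exp.mpr (hmtri i k j)
  calc Real.exp (m i j) * (A i k * B k j)
      ≤ Real.exp (m i k) * Real.exp (m k j) * (A i k * B k j) :=
        mul_le_mul_of_nonneg_right hexp (mul_nonneg (hA i k) (hB k j))
    _ = Real.exp (m i k) * A i k * (Real.exp (m k j) * B k j) := by ring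

theorem expWeightedRowSum_mul_le_mul (hmtri : ∀ i j k, m i k ≤ m i j + m j k)
    {A B : Matrix I I ℝ} (hA : ∀ i j, 0 ≤ A i j) (hB : ∀ i j, 0 ≤ B i j) {a b : ℝ}
    (ha : ∀ i, expWeightedRowSum m A i ≤ a) (hb : ∀ i, expWeightedRowSum m B i ≤ b)
    (hb0 : 0 ≤ b) (i : I) :
    expWeightedRowSum m (A * B) i ≤ a * b :=
  calc expWeightedRowSum m (A * B) i
      ≤ ∑ k, Real.exp (m i k) * A i k * expWeightedRowSum m B k :=
        expWeightedRowSum_mul_le hmtri hA hB i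
    _ ≤ ∑ k, Real.exp (m i k) * A i k * b :=
        sum_le_sum fun k _ => mul_le_mul_of_nonneg_left (hb k)
          (mul_nonneg (Real.exp_pos _).le (hA i k))
    _ = expWeightedRowSum m A i * b := by rw [expWeightedRowSum, sum_mul]
    _ ≤ a * b := mul_le_mul_of_nonneg_right (ha i) hb0

theorem expWeightedRowSum_pow_le [DecidableEq I] (hm0 : ∀ i, m i i = 0)
    (hmtri : ∀ i j k, m i k ≤ m i j + m j k) {C : Matrix I I ℝ} (hC : ∀ i j, 0 ≤ C i j)
    {d : ℝ} (hd0 : 0 ≤ d) (hrow : ∀ i, expWeightedRowSum m C i ≤ d) (n : ℕ) (i : I) :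
    expWeightedRowSum m (C ^ n) i ≤ d ^ n := by
  induction n generalizing i with
  | zero => simp [expWeightedRowSum_one hm0]
  | succ n ih =>
    rw [pow_succ', pow_succ']
    exact expWeightedRowSum_mul_le_mul hmtri hC (pow_apply_nonneg hC n) hrow ih
      (pow_nonneg hd0 n) i

theorem _root_.HasSum.expWeightedRowSum {f : ℕ → Matrix I I ℝ} {A : Matrix I I ℝ} (h : HasSum f A)
    (i : I) : HasSum (fun n => expWeightedRowSum m (f n) i) (expWeightedRowSum m A i) :=
  hasSum_sum fun j _ => ((Pi.hasSum.mp (Pi.hasSum.mp h i)) j).mul_left _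

theorem hasSum_pow_inv_one_sub [DecidableEq I] (hm0 : ∀ i, m i i = 0)
    (hmtri : ∀ i j k, m i k ≤ m i j + m j k) {C : Matrix I I ℝ} (hC : ∀ i j, 0 ≤ C i j)
    {d : ℝ} (hd0 : 0 ≤ d) (hd : d < 1) (hrow : ∀ i, expWeightedRowSum m C i ≤ d) :
    HasSum (fun n : ℕ => C ^ n) (1 - C)⁻¹ := by
  have hsummable : Summable fun n : ℕ => C ^ n := by
    refine Pi.summable.mpr fun i => Pi.summable.mpr fun j => ?_
    have hweighted : Summable fun n : ℕ => Real.exp (m i j) * (C ^ n) i j :=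
      (summable_geometric_of_lt_one hd0 hd).of_nonneg_of_le
        (fun n => mul_nonneg (Real.exp_pos _).le (pow_apply_nonneg hC n i j))
        (fun n => (exp_mul_apply_le_expWeightedRowSum (pow_apply_nonneg hC n) i j).trans
          (expWeightedRowSum_pow_le hm0 hmtri hC hd0 hrow n i))
    exact (summable_mul_left_iff (Real.exp_pos _).ne').mp hweighted
  rw [inv_eq_right_inv hsummable.one_sub_mul_tsum_pow]
  exact hsummable.hasSum

end Matrix

open Matrix in
theorem weighted_neumann_bound_general {I : Type*} [Fintype I] [DecidableEq I] [Nonempty I]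
    (C : Matrix I I ℝ) (hCnn : ∀ i j, 0 ≤ C i j)
    (m : I → I → ℝ)
    (hm0 : ∀ i, m i i = 0)
    (hmtri : ∀ i j k, m i k ≤ m i j + m j k)
    (d : ℝ) (hd : d < 1)
    (hrow : (Finset.univ.sup' Finset.univ_nonempty fun i => ∑ j, Real.exp (m i j) * C i j) ≤ d) :
    HasSum (fun n : ℕ => C ^ n) (1 - C)⁻¹ ∧
    (Finset.univ.sup' Finset.univ_nonempty fun i => ∑ j, Real.exp (m i j) * ((1 - C)⁻¹) i j)
      ≤ 1 / (1 - d) := by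
  have hrow_le : ∀ i, expWeightedRowSum m C i ≤ d := fun i =>
    (sup'_le_iff _ _).mp hrow i (mem_univ i)
  obtain ⟨i₀⟩ := ‹Nonempty I›
  have hd0 : 0 ≤ d :=
    (sum_nonneg fun j _ => mul_nonneg (Real.exp_pos _).le (hCnn i₀ j)).trans (hrow_le i₀)
  have hneumann := hasSum_pow_inv_one_sub hm0 hmtri hCnn hd0 hd hrow_le
  refine ⟨hneumann, sup'_le _ _ fun i _ => ?_⟩
  rw [one_div]
  exact hasSum_le (fun n => expWeightedRowSum_pow_le hm0 hmtri hCnn hd0 hrow_le n i)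
    (hneumann.expWeightedRowSum i) (hasSum_geometric_of_lt_one hd0 hd)

theorem weighted_neumann_bound {I : Type*} [Fintype I] [DecidableEq I] [Nonempty I]
    (C : Matrix I I ℝ) (hCnn : ∀ i j, 0 ≤ C i j)
    (m : I → I → ℝ)
    (hm0 : ∀ i, m i i = 0) (hmsymm : ∀ i j, m i j = m j i)
    (hmtri : ∀ i j k, m i k ≤ m i j + m j k) (hmnn : ∀ i j, 0 ≤ m i j)
    (d : ℝ) (hd : d < 1)
    (hrow : (Finset.univ.sup' Finset.univ_nonempty fun i => ∑ j, Real.exp (m i j) * C i j) ≤ d) :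
    HasSum (fun n : ℕ => C ^ n) (1 - C)⁻¹ ∧
    (Finset.univ.sup' Finset.univ_nonempty fun i => ∑ j, Real.exp (m i j) * ((1 - C)⁻¹) i j)
      ≤ 1 / (1 - d) :=
  weighted_neumann_bound_general C hCnn m hm0 hmtri d hd hrow
end

section
/- Let C be a nonnegative square matrix indexed by a finite set I, m a pseudo-metric on I with max_{i∈I} Σ_{j∈I} e^{m(i,j)} C_{ij} ≤ d < 1, and D = (I−C)^{-1}. Then for every subset J ⊆ I and every i ∈ I, Σ_{j∈J} D_{ij} ≤ e^{−m(i,J)} / (1−d), where m(i,J) = min_{j∈J} m(i,j). -/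
open Finset

theorem weighted_neumann_subset_bound {I : Type*} [Fintype I] [DecidableEq I] [Nonempty I]
    (C : Matrix I I ℝ) (hCnn : ∀ i j, 0 ≤ C i j)
    (m : I → I → ℝ)
    (hm0 : ∀ i, m i i = 0) (hmsymm : ∀ i j, m i j = m j i)
    (hmtri : ∀ i j k, m i k ≤ m i j + m j k) (hmnn : ∀ i j, 0 ≤ m i j)
    (d : ℝ) (hd : d < 1)
    (hrow : (Finset.univ.sup' Finset.univ_nonempty fun i => ∑ j, Real.exp (m i j) * C i j) ≤ d)
    (J : Finset I) (hJ : J.Nonempty) (i : I) :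
    ∑ j ∈ J, ((1 - C)⁻¹) i j ≤ Real.exp (-(J.inf' hJ fun j => m i j)) / (1 - d) := by
  classical
  -- row bound for each i
  have hrow' : ∀ i : I, ∑ j, Real.exp (m i j) * C i j ≤ d := fun i =>
    le_trans (Finset.le_sup' (fun i => ∑ j, Real.exp (m i j) * C i j) (Finset.mem_univ i)) hrow
  have hd0 : 0 ≤ d := by
    obtain ⟨i0⟩ := ‹Nonempty I›
    refine le_trans ?_ (hrow' i0)
    exact Finset.sum_nonneg fun j _ => mul_nonneg (Real.exp_pos _).le (hCnn _ _)
  -- nonnegativity of powers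
  have hnn : ∀ n : ℕ, ∀ a b : I, 0 ≤ (C ^ n) a b := by
    intro n
    induction n with
    | zero => intro a b; simp [Matrix.one_apply]; positivity
    | succ n ih =>
      intro a b
      rw [pow_succ, Matrix.mul_apply]
      exact Finset.sum_nonneg fun k _ => mul_nonneg (ih a k) (hCnn k b)
  -- weighted bound on powers
  have hW : ∀ n : ℕ, ∀ a : I, ∑ j, Real.exp (m a j) * (C ^ n) a j ≤ d ^ n := by
    intro n
    induction n with
    | zero =>
      intro a
      simp only [pow_zero, Matrix.one_apply]
      rw [Finset.sum_eq_single a]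
      · simp [hm0]
      · intro b _ hb; simp [hb.symm, Ne.symm hb]
      · simp
    | succ n ih =>
      intro a
      have key : ∑ j, Real.exp (m a j) * (C ^ (n + 1)) a j
          ≤ ∑ k, Real.exp (m a k) * C a k * d ^ n := by
        have : ∀ j, Real.exp (m a j) * (C ^ (n + 1)) a j
            ≤ ∑ k, Real.exp (m a k) * C a k * (Real.exp (m k j) * (C ^ n) k j) := by
          intro j
          rw [pow_succ', Matrix.mul_apply, Finset.mul_sum]
          refine Finset.sum_le_sum fun k _ => ?_
          have h1 : Real.exp (m a j) ≤ Real.exp (m a k) * Real.exp (m k j) := by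
            rw [← Real.exp_add]; exact Real.exp_le_exp.mpr (hmtri a k j)
          have h2 : 0 ≤ C a k * (C ^ n) k j := mul_nonneg (hCnn a k) (hnn n k j)
          calc Real.exp (m a j) * (C a k * (C ^ n) k j)
              ≤ Real.exp (m a k) * Real.exp (m k j) * (C a k * (C ^ n) k j) :=
                mul_le_mul_of_nonneg_right h1 h2
            _ = Real.exp (m a k) * C a k * (Real.exp (m k j) * (C ^ n) k j) := by ring
        calc ∑ j, Real.exp (m a j) * (C ^ (n + 1)) a j
            ≤ ∑ j, ∑ k, Real.exp (m a k) * C a k * (Real.exp (m k j) * (C ^ n) k j) :=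
              Finset.sum_le_sum fun j _ => this j
          _ = ∑ k, Real.exp (m a k) * C a k * ∑ j, Real.exp (m k j) * (C ^ n) k j := by
              rw [Finset.sum_comm]; simp [Finset.mul_sum]
          _ ≤ ∑ k, Real.exp (m a k) * C a k * d ^ n := by
              refine Finset.sum_le_sum fun k _ => ?_
              exact mul_le_mul_of_nonneg_left (ih k)
                (mul_nonneg (Real.exp_pos _).le (hCnn a k))
      calc ∑ j, Real.exp (m a j) * (C ^ (n + 1)) a j
          ≤ ∑ k, Real.exp (m a k) * C a k * d ^ n := key
        _ = (∑ k, Real.exp (m a k) * C a k) * d ^ n := by rw [Finset.sum_mul]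
        _ ≤ d * d ^ n := mul_le_mul_of_nonneg_right (hrow' a) (pow_nonneg hd0 n)
        _ = d ^ (n + 1) := by rw [pow_succ']
  -- entrywise bound and summability
  have hub : ∀ n : ℕ, ∀ a b : I, (C ^ n) a b ≤ d ^ n := by
    intro n a b
    calc (C ^ n) a b ≤ Real.exp (m a b) * (C ^ n) a b := by
          nlinarith [hnn n a b, Real.one_le_exp (hmnn a b)]
      _ ≤ ∑ j, Real.exp (m a j) * (C ^ n) a j :=
          Finset.single_le_sum (fun j _ => mul_nonneg (Real.exp_pos _).le (hnn n a j))
            (Finset.mem_univ b)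
      _ ≤ d ^ n := hW n a
  have hgeo : Summable fun n : ℕ => d ^ n := summable_geometric_of_lt_one hd0 hd
  have hsum : ∀ a b : I, Summable fun n : ℕ => (C ^ n) a b := fun a b =>
    Summable.of_nonneg_of_le (fun n => hnn n a b) (fun n => hub n a b) hgeo
  -- the Neumann series matrix
  set D : Matrix I I ℝ := Matrix.of fun a b => ∑' n : ℕ, (C ^ n) a b with hD
  have hDnn : ∀ a b, 0 ≤ D a b := fun a b => tsum_nonneg fun n => hnn n a b
  -- (1 - C) * D = 1
  have hmul : (1 - C) * D = 1 := by
    ext a b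
    rw [Matrix.mul_apply]
    have h1 : ∀ k, (1 - C : Matrix I I ℝ) a k * D k b
        = (1 : Matrix I I ℝ) a k * D k b - C a k * D k b := by
      intro k; rw [Matrix.sub_apply]; ring
    rw [Finset.sum_congr rfl fun k _ => h1 k, Finset.sum_sub_distrib]
    have h2 : ∑ k, (1 : Matrix I I ℝ) a k * D k b = D a b := by
      simp [Matrix.one_apply]
    have h3 : ∑ k, C a k * D k b = ∑' n : ℕ, (C ^ (n + 1)) a b := by
      have : ∀ k, C a k * D k b = ∑' n : ℕ, C a k * (C ^ n) k b := by
        intro k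
        simp only [hD, Matrix.of_apply]
        rw [Summable.tsum_mul_left _ (hsum k b)]
      rw [Finset.sum_congr rfl fun k _ => this k, ← Summable.tsum_finsetSum
        (fun k _ => (hsum k b).mul_left _)]
      congr 1
      ext n
      rw [pow_succ', Matrix.mul_apply]
    have h4 : ∑' n : ℕ, (C ^ (n + 1)) a b = D a b - (1 : Matrix I I ℝ) a b := by
      have := Summable.tsum_eq_zero_add (hsum a b)
      simp only [pow_zero] at this
      simp only [hD, Matrix.of_apply]
      rw [this]; ring
    rw [h2, h3, h4]; ring
  have hinv : (1 - C)⁻¹ = D := Matrix.inv_eq_right_inv hmul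
  rw [hinv]
  -- final estimate
  set M : ℝ := J.inf' hJ fun j => m i j with hM
  have hMle : ∀ j ∈ J, M ≤ m i j := fun j hj => Finset.inf'_le _ hj
  have step1 : ∑ j ∈ J, D i j ≤ Real.exp (-M) * ∑ j, Real.exp (m i j) * D i j := by
    calc ∑ j ∈ J, D i j ≤ ∑ j ∈ J, Real.exp (-M) * (Real.exp (m i j) * D i j) := by
          refine Finset.sum_le_sum fun j hj => ?_
          have h1 : (1 : ℝ) ≤ Real.exp (-M) * Real.exp (m i j) := by
            rw [← Real.exp_add]
            exact Real.one_le_exp (by linarith [hMle j hj])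
          nlinarith [hDnn i j]
      _ ≤ ∑ j, Real.exp (-M) * (Real.exp (m i j) * D i j) := by
          refine Finset.sum_le_sum_of_subset_of_nonneg (Finset.subset_univ J) ?_
          intro j _ _
          exact mul_nonneg (Real.exp_pos _).le (mul_nonneg (Real.exp_pos _).le (hDnn i j))
      _ = Real.exp (-M) * ∑ j, Real.exp (m i j) * D i j := by rw [Finset.mul_sum]
  have step2 : ∑ j, Real.exp (m i j) * D i j ≤ 1 / (1 - d) := by
    have h1 : ∑ j, Real.exp (m i j) * D i j
        = ∑' n : ℕ, ∑ j, Real.exp (m i j) * (C ^ n) i j := by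
      have : ∀ j : I, Real.exp (m i j) * D i j
          = ∑' n : ℕ, Real.exp (m i j) * (C ^ n) i j := by
        intro j
        simp only [hD, Matrix.of_apply]
        rw [Summable.tsum_mul_left _ (hsum i j)]
      rw [Finset.sum_congr rfl fun j _ => this j, ← Summable.tsum_finsetSum
        (fun j _ => (hsum i j).mul_left _)]
    rw [h1]
    have hsW : Summable fun n : ℕ => ∑ j, Real.exp (m i j) * (C ^ n) i j := by
      refine Summable.of_nonneg_of_le (fun n => ?_) (fun n => hW n i) hgeo
      exact Finset.sum_nonneg fun j _ => mul_nonneg (Real.exp_pos _).le (hnn n i j)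
    calc ∑' n : ℕ, ∑ j, Real.exp (m i j) * (C ^ n) i j
        ≤ ∑' n : ℕ, d ^ n := Summable.tsum_le_tsum (fun n => hW n i) hsW hgeo
      _ = (1 - d)⁻¹ := tsum_geometric_of_lt_one hd0 hd
      _ = 1 / (1 - d) := (one_div _).symm
  have hexp : 0 < Real.exp (-M) := Real.exp_pos _
  calc ∑ j ∈ J, D i j ≤ Real.exp (-M) * ∑ j, Real.exp (m i j) * D i j := step1
    _ ≤ Real.exp (-M) * (1 / (1 - d)) := mul_le_mul_of_nonneg_left step2 hexp.le
    _ = Real.exp (-M) / (1 - d) := by ring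
end

section
/- Let C be a nonnegative matrix indexed by finite set I with C_{ij} = 0 whenever the graph distance d(i,j) ≠ 1, and c = max_i Σ_j C_{ij} with 0 < c < 1. Let D = (I−C)^{-1}, fix a node i and a subset J ⊆ I, and fix t > 1. Then Σ_{j∈J} D_{ij} ≤ (t/((t−1)(1−c))) · ((tc)/(1+(t−1)c))^{d(i,J)}, where d(i,J) = min_{j∈J} d(i,j). In particular, if d(i,J) ≥ ln(t/(2ε(t−1)(1−c))) / ln((1+(t−1)c)/(tc)), then Σ_{j∈J} D_{ij} · (1/2) ≤ ε. -/
/-!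
Expand `(1 - C)⁻¹ = ∑ₙ Cⁿ`, which converges because `c < 1` bounds the `ℓ∞` operator norm of `C`.
Since `C` only links nodes at distance one, `(Cⁿ)ᵢⱼ = 0` for `n < d(i, j)`, and the row sums of `Cⁿ`
are at most `cⁿ`; hence `∑_{j ∈ J} Dᵢⱼ ≤ ∑_{n ≥ d(i,J)} cⁿ = c^{d(i,J)} / (1 - c)`.
Since `c ≤ tc / (1 + (t-1)c)`, this is at most the stated bound, and the threshold on `d(i, J)`
is that bound solved for `2ε`.
-/

open Finset

theorem HasSum.le_geometric_tail {f : ℕ → ℝ} {a c : ℝ} {d : ℕ} (hf : HasSum f a)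
    (hzero : ∀ n < d, f n = 0) (hle : ∀ n, f n ≤ c ^ n) (hc0 : 0 ≤ c) (hc1 : c < 1) :
    a ≤ c ^ d / (1 - c) := by
  have htail : HasSum (fun n => f (n + d)) a := by
    simpa [sum_eq_zero fun n hn => hzero n (mem_range.mp hn)] using (hasSum_nat_add_iff' d).mpr hf
  have hgeom : HasSum (fun n => c ^ (n + d)) (c ^ d / (1 - c)) := by
    simpa [pow_add, mul_comm, div_eq_mul_inv] using
      (hasSum_geometric_of_lt_one hc0 hc1).mul_left (c ^ d)
  exact hasSum_le (fun n => hle (n + d)) htail hgeom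

namespace Matrix

variable {I : Type*} [Fintype I] [DecidableEq I] {C : Matrix I I ℝ} {c : ℝ}

theorem sum_pow_apply_le_pow (hC : ∀ i j, 0 ≤ C i j) (hrow : ∀ i, ∑ j, C i j ≤ c) (hc : 0 ≤ c)
    (n : ℕ) (i : I) : ∑ j, (C ^ n) i j ≤ c ^ n := by
  induction n generalizing i with
  | zero => simp [one_apply]
  | succ n ih =>
    calc ∑ j, (C ^ (n + 1)) i j = ∑ l, (C ^ n) i l * ∑ j, C l j := by
          simp_rw [pow_succ, mul_apply, Finset.mul_sum]
          exact Finset.sum_comm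
      _ ≤ ∑ l, (C ^ n) i l * c :=
          sum_le_sum fun l _ => mul_le_mul_of_nonneg_left (hrow l) (pow_apply_nonneg hC n i l)
      _ = (∑ l, (C ^ n) i l) * c := (Finset.sum_mul ..).symm
      _ ≤ c ^ (n + 1) := by rw [pow_succ]; exact mul_le_mul_of_nonneg_right (ih i) hc

theorem pow_apply_eq_zero_of_lt_dist (dist : I → I → ℕ) (hd_self : ∀ i, dist i i = 0)
    (hdtri : ∀ i j k, dist i k ≤ dist i j + dist j k) (hsupp : ∀ i j, dist i j ≠ 1 → C i j = 0)
    {n : ℕ} {i j : I} (h : n < dist i j) : (C ^ n) i j = 0 := by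
  induction n generalizing i with
  | zero =>
    have hij : i ≠ j := by rintro rfl; simp [hd_self] at h
    simp [hij]
  | succ n ih =>
    rw [pow_succ', mul_apply]
    refine sum_eq_zero fun l _ => ?_
    by_cases hil : dist i l = 1
    · rw [ih (by have := hdtri i l j; omega), mul_zero]
    · rw [hsupp i l hil, zero_mul]

section LinftyOpNorm

attribute [local instance] Matrix.linftyOpNormedRing Matrix.linftyOpNormedAlgebra

theorem linfty_opNorm_le_of_row_sum_le (hC : ∀ i j, 0 ≤ C i j) (hrow : ∀ i, ∑ j, C i j ≤ c)
    (hc : 0 ≤ c) : ‖C‖ ≤ c := by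
  rw [linfty_opNorm_def]
  suffices (univ.sup fun i => ∑ j, ‖C i j‖₊) ≤ ⟨c, hc⟩ by exact_mod_cast this
  refine Finset.sup_le fun i _ => NNReal.coe_le_coe.mp ?_
  push_cast
  calc ∑ j, ‖C i j‖ = ∑ j, C i j := by simp [Real.norm_of_nonneg (hC i _)]
    _ ≤ c := hrow i

theorem hasSum_pow_inv_one_sub_s4 (hC : ∀ i j, 0 ≤ C i j) (hrow : ∀ i, ∑ j, C i j ≤ c)
    (hc0 : 0 ≤ c) (hc1 : c < 1) : HasSum (fun n => C ^ n) (1 - C)⁻¹ := by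
  have hnorm : ‖C‖ < 1 := (linfty_opNorm_le_of_row_sum_le hC hrow hc0).trans_lt hc1
  rw [inv_eq_right_inv (mul_neg_geom_series C hnorm)]
  exact (summable_geometric_of_norm_lt_one hnorm).hasSum

end LinftyOpNorm

theorem sum_inv_one_sub_apply_le (dist : I → I → ℕ) (hd_self : ∀ i, dist i i = 0)
    (hdtri : ∀ i j k, dist i k ≤ dist i j + dist j k)
    (hC : ∀ i j, 0 ≤ C i j) (hsupp : ∀ i j, dist i j ≠ 1 → C i j = 0)
    (hrow : ∀ i, ∑ j, C i j ≤ c) (hc0 : 0 ≤ c) (hc1 : c < 1)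
    (i : I) (J : Finset I) {d : ℕ} (hd : ∀ j ∈ J, d ≤ dist i j) :
    ∑ j ∈ J, (1 - C)⁻¹ i j ≤ c ^ d / (1 - c) := by
  have hsum : HasSum (fun n => ∑ j ∈ J, (C ^ n) i j) (∑ j ∈ J, (1 - C)⁻¹ i j) :=
    hasSum_sum fun j _ => Pi.hasSum.mp (Pi.hasSum.mp (hasSum_pow_inv_one_sub_s4 hC hrow hc0 hc1) i) j
  refine hsum.le_geometric_tail (fun n hn => ?_) (fun n => ?_) hc0 hc1
  · exact sum_eq_zero fun j hj =>
      pow_apply_eq_zero_of_lt_dist dist hd_self hdtri hsupp (hn.trans_le (hd j hj))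
  · calc ∑ j ∈ J, (C ^ n) i j ≤ ∑ j, (C ^ n) i j :=
          sum_le_sum_of_subset_of_nonneg (subset_univ J) fun j _ _ => pow_apply_nonneg hC n i j
      _ ≤ c ^ n := sum_pow_apply_le_pow hC hrow hc0 n i

end Matrix

theorem pow_le_inv_of_log_div_log_inv_le {r A : ℝ} {d : ℕ} (hr0 : 0 < r) (hr1 : r < 1)
    (hA : 0 < A) (h : Real.log A / Real.log r⁻¹ ≤ d) : r ^ d ≤ A⁻¹ := by
  have hlog : 0 < Real.log r⁻¹ := Real.log_pos (one_lt_inv₀ hr0 |>.mpr hr1)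
  rw [Real.pow_le_iff_le_log hr0 (inv_pos.mpr hA), Real.log_inv A]
  rw [div_le_iff₀ hlog, Real.log_inv r] at h
  linarith

theorem mul_div_one_add_sub_one_mul_lt_one {c t : ℝ} (hc0 : 0 < c) (hc1 : c < 1) (ht : 1 < t) :
    t * c / (1 + (t - 1) * c) < 1 := by
  rw [div_lt_one (by nlinarith)]
  nlinarith

theorem pow_div_one_sub_le {c t : ℝ} (hc0 : 0 < c) (hc1 : c < 1) (ht : 1 < t) (d : ℕ) :
    c ^ d / (1 - c) ≤ t / ((t - 1) * (1 - c)) * (t * c / (1 + (t - 1) * c)) ^ d := by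
  have h1c := sub_pos.mpr hc1
  have hden : 0 < 1 + (t - 1) * c := by nlinarith
  have hcr : c ≤ t * c / (1 + (t - 1) * c) := by
    rw [le_div_iff₀ hden]
    nlinarith [mul_pos (mul_pos (sub_pos.mpr ht) hc0) h1c]
  have hK : (1 - c)⁻¹ ≤ t / ((t - 1) * (1 - c)) := by
    rw [inv_eq_one_div, div_le_div_iff₀ h1c (by nlinarith)]
    nlinarith
  rw [div_eq_mul_inv, mul_comm]
  gcongr

theorem distance_based_neumann_bound_general {I : Type*} [Fintype I] [DecidableEq I] [Nonempty I]
    (dist : I → I → ℕ)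
    (hd0 : ∀ i j, dist i j = 0 ↔ i = j)
    (hdtri : ∀ i j k, dist i k ≤ dist i j + dist j k)
    (C : Matrix I I ℝ) (hCnn : ∀ i j, 0 ≤ C i j)
    (hsupp : ∀ i j, dist i j ≠ 1 → C i j = 0)
    (c : ℝ) (hc : c = Finset.univ.sup' Finset.univ_nonempty fun i => ∑ j, C i j)
    (hc0 : 0 < c) (hc1 : c < 1)
    (t : ℝ) (ht : 1 < t)
    (i : I) (J : Finset I) (hJ : J.Nonempty) :
    ∑ j ∈ J, ((1 - C)⁻¹) i j
      ≤ t / ((t - 1) * (1 - c)) * ((t * c) / (1 + (t - 1) * c)) ^ (J.inf' hJ fun j => dist i j) ∧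
    (∀ ε : ℝ, 0 < ε →
      (((J.inf' hJ fun j => dist i j : ℕ) : ℝ)
          ≥ Real.log (t / (2 * ε * (t - 1) * (1 - c))) / Real.log ((1 + (t - 1) * c) / (t * c)))
        → (∑ j ∈ J, ((1 - C)⁻¹) i j) * (1 / 2) ≤ ε) := by
  set d := J.inf' hJ fun j => dist i j
  set K := t / ((t - 1) * (1 - c))
  have hrow : ∀ k, ∑ j, C k j ≤ c := fun k => hc ▸ le_sup' (fun k => ∑ j, C k j) (mem_univ k)
  have hbound : ∑ j ∈ J, (1 - C)⁻¹ i j ≤ K * (t * c / (1 + (t - 1) * c)) ^ d :=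
    (Matrix.sum_inv_one_sub_apply_le dist (fun k => (hd0 k k).mpr rfl) hdtri hCnn hsupp hrow
      hc0.le hc1 i J fun j hj => inf'_le _ hj).trans (pow_div_one_sub_le hc0 hc1 ht d)
  refine ⟨hbound, fun ε hε hdist => ?_⟩
  have h1c := sub_pos.mpr hc1
  have ht1 := sub_pos.mpr ht
  have hrd := pow_le_inv_of_log_div_log_inv_le (d := d) (A := t / (2 * ε * (t - 1) * (1 - c)))
    (by positivity) (mul_div_one_add_sub_one_mul_lt_one hc0 hc1 ht) (by positivity)
    (by rwa [inv_div])
  have hKA : K * (t / (2 * ε * (t - 1) * (1 - c)))⁻¹ = 2 * ε := by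
    simp only [K]
    field_simp
  nlinarith [mul_le_mul_of_nonneg_left hrd (by positivity : 0 ≤ K)]

theorem distance_based_neumann_bound {I : Type*} [Fintype I] [DecidableEq I] [Nonempty I]
    (dist : I → I → ℕ)
    (hd0 : ∀ i j, dist i j = 0 ↔ i = j)
    (hdsymm : ∀ i j, dist i j = dist j i)
    (hdtri : ∀ i j k, dist i k ≤ dist i j + dist j k)
    (C : Matrix I I ℝ) (hCnn : ∀ i j, 0 ≤ C i j)
    (hsupp : ∀ i j, dist i j ≠ 1 → C i j = 0)
    (c : ℝ) (hc : c = Finset.univ.sup' Finset.univ_nonempty fun i => ∑ j, C i j)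
    (hc0 : 0 < c) (hc1 : c < 1)
    (t : ℝ) (ht : 1 < t)
    (i : I) (J : Finset I) (hJ : J.Nonempty) :
    ∑ j ∈ J, ((1 - C)⁻¹) i j
      ≤ t / ((t - 1) * (1 - c)) * ((t * c) / (1 + (t - 1) * c)) ^ (J.inf' hJ fun j => dist i j) ∧
    (∀ ε : ℝ, 0 < ε →
      (((J.inf' hJ fun j => dist i j : ℕ) : ℝ)
          ≥ Real.log (t / (2 * ε * (t - 1) * (1 - c))) / Real.log ((1 + (t - 1) * c) / (t * c)))
        → (∑ j ∈ J, ((1 - C)⁻¹) i j) * (1 / 2) ≤ ε) :=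
  distance_based_neumann_bound_general dist hd0 hdtri C hCnn hsupp c hc hc0 hc1 t ht i J hJ
end

section
/- For an Ising model on a graph, if i is a neighbor of k, the Dobrushin coefficient satisfies C_{ki} ≤ tanh(|J_{ik}|). Consequently, if the graph has maximum degree d and all |J_{ij}| ≤ β with d·tanh(β) < 1, then the Dobrushin condition c = max_k Σ_i C_{ki} < 1 holds. -/
open Finset

/-- The two-point spin space `{-1, +1}`. -/
abbrev Spin : Type := ({-1, 1} : Finset ℤ)

/-- Energy of an Ising configuration. -/
noncomputable def isingEnergy {V : Type*} [Fintype V] (G : SimpleGraph V) [DecidableRel G.Adj]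
    (J : V → V → ℝ) (h : V → ℝ) (x : V → Spin) : ℝ :=
  (1 / 2) * ∑ i, ∑ j, (if G.Adj i j then J i j * ((x i : ℤ) : ℝ) * ((x j : ℤ) : ℝ) else 0)
    + ∑ i, h i * ((x i : ℤ) : ℝ)

/-- The Ising model probability measure. -/
noncomputable def isingMu {V : Type*} [Fintype V] [DecidableEq V] (G : SimpleGraph V)
    [DecidableRel G.Adj] (J : V → V → ℝ) (h : V → ℝ) (x : V → Spin) : ℝ :=
  Real.exp (isingEnergy G J h x) / ∑ y : V → Spin, Real.exp (isingEnergy G J h y)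

/-- Conditional distribution of coordinate `i` given all other coordinates of `x`. -/
noncomputable def condDist {I S : Type*} [Fintype I] [DecidableEq I] [Fintype S]
    (μ : (I → S) → ℝ) (i : I) (x : I → S) (s : S) : ℝ :=
  μ (Function.update x i s) / ∑ s' : S, μ (Function.update x i s')

/-- Total variation distance between two distributions on a finite space. -/
noncomputable def tvDist {S : Type*} [Fintype S] (p q : S → ℝ) : ℝ :=
  (1 / 2) * ∑ s : S, |p s - q s|

/-- The Dobrushin interaction matrix of `μ`. -/
noncomputable def dobrushinC {I S : Type*} [Fintype I] [DecidableEq I] [Fintype S]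
    (μ : (I → S) → ℝ) (i j : I) : ℝ :=
  (1 / 2) * ⨆ q : {q : (I → S) × (I → S) // ∀ k, k ≠ j → q.1 k = q.2 k},
    tvDist (condDist μ i q.1.1) (condDist μ i q.1.2)

/-! Given the other spins, the spin at `k` is `s` with probability `(1 + s tanh L)/2`, where
`L = h k + ∑ j, J k j * x j` is the local field: since `J` is symmetric with no self-coupling,
the energy is affine in `x k` with slope `L`. Flipping the spin at `i` moves `L` by at most
`2 |J k i|`, and `|tanh a - tanh b| ≤ 2 tanh (|a - b| / 2)` (the difference
`tanh (M + c) - tanh (M - c)` is largest at `M = 0`), so the two conditionals are within total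
variation `tanh |J k i|`. Summing over the at most `d` neighbours of `k` gives the Dobrushin
condition. -/

open Real Matrix

namespace Real

lemma tanh_monotone : Monotone tanh := by
  intro a b hab
  by_contra! hlt
  have := artanh_lt_artanh (neg_one_lt_tanh b) (tanh_lt_one a) hlt
  rw [artanh_tanh, artanh_tanh] at this
  linarith

lemma tanh_nonneg {x : ℝ} (hx : 0 ≤ x) : 0 ≤ tanh x := tanh_zero ▸ tanh_monotone hx

lemma tanh_add_sub_tanh_sub (m c : ℝ) :
    tanh (m + c) - tanh (m - c) = 2 * sinh c * cosh c / (cosh m ^ 2 + sinh c ^ 2) := by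
  have h1 := cosh_pos (m + c)
  have h2 := cosh_pos (m - c)
  have h3 : 0 < cosh m ^ 2 + sinh c ^ 2 := by positivity
  rw [tanh_eq_sinh_div_cosh, tanh_eq_sinh_div_cosh, div_sub_div _ _ h1.ne' h2.ne',
    div_eq_div_iff (by positivity) h3.ne']
  simp only [sinh_add, sinh_sub, cosh_add, cosh_sub]
  linear_combination
    2 * cosh c * sinh c * cosh m ^ 2 * (cosh_sq_sub_sinh_sq m - cosh_sq_sub_sinh_sq c)

lemma tanh_add_sub_tanh_sub_le {c : ℝ} (m : ℝ) (hc : 0 ≤ c) :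
    tanh (m + c) - tanh (m - c) ≤ 2 * tanh c := by
  have hcosh_sq : cosh c ^ 2 ≤ cosh m ^ 2 + sinh c ^ 2 := by
    nlinarith [cosh_sq_sub_sinh_sq c, one_le_cosh m]
  calc tanh (m + c) - tanh (m - c) = 2 * sinh c * cosh c / (cosh m ^ 2 + sinh c ^ 2) :=
        tanh_add_sub_tanh_sub m c
    _ ≤ 2 * sinh c * cosh c / cosh c ^ 2 := by
        have := sinh_nonneg_iff.2 hc
        gcongr
    _ = 2 * tanh c := by
        rw [tanh_eq_sinh_div_cosh]
        field_simp [(cosh_pos c).ne']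

lemma abs_tanh_sub_tanh_le (a b : ℝ) : |tanh a - tanh b| ≤ 2 * tanh (|a - b| / 2) := by
  wlog hba : b ≤ a generalizing a b
  · rw [abs_sub_comm, abs_sub_comm a]
    exact this b a (by linarith)
  obtain ⟨m, c, rfl, rfl, hc⟩ : ∃ m c, a = m + c ∧ b = m - c ∧ 0 ≤ c :=
    ⟨(a + b) / 2, (a - b) / 2, by ring, by ring, by linarith⟩
  rw [abs_of_nonneg (sub_nonneg.2 (tanh_monotone hba)),
    show |m + c - (m - c)| / 2 = c by rw [abs_of_nonneg (by linarith)]; ring]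
  exact tanh_add_sub_tanh_sub_le m hc

end Real

namespace Spin

def toReal (s : Spin) : ℝ := ((s : ℤ) : ℝ)

lemma toReal_eq_neg_one_or_one (s : Spin) : s.toReal = -1 ∨ s.toReal = 1 := by
  rcases s with ⟨v, hv⟩
  simp only [Finset.mem_insert, Finset.mem_singleton] at hv
  rcases hv with rfl | rfl <;> simp [toReal]

lemma abs_toReal (s : Spin) : |s.toReal| = 1 := by
  rcases s.toReal_eq_neg_one_or_one with h | h <;> simp [h]

lemma sum_univ_toReal (g : ℝ → ℝ) : ∑ s : Spin, g s.toReal = g (-1) + g 1 := by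
  have huniv : (Finset.univ : Finset Spin) = {⟨-1, by decide⟩, ⟨1, by decide⟩} := by decide
  rw [huniv, Finset.sum_pair (by decide)]
  simp [toReal]

end Spin

lemma exp_div_sum_exp_spin (R L : ℝ) (s : Spin) :
    exp (R + s.toReal * L) / ∑ s' : Spin, exp (R + s'.toReal * L)
      = (1 + s.toReal * tanh L) / 2 := by
  rw [Spin.sum_univ_toReal (fun t => exp (R + t * L)), tanh_eq]
  have := exp_pos L
  have := exp_pos (-L)
  rcases s.toReal_eq_neg_one_or_one with h | h <;> rw [h] <;>
    simp only [exp_add, exp_neg, neg_one_mul, one_mul] <;> field_simp <;> ring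

section UpdateCoordinate

variable {n R : Type*} [DecidableEq n] [CommRing R]

lemma update_eq_update_zero_add_single (x : n → R) (k : n) (t : R) :
    Function.update x k t = Function.update x k 0 + Pi.single k t := by
  ext i
  by_cases hi : i = k <;> simp [hi]

variable [Fintype n]

lemma dotProduct_update (v x : n → R) (k : n) (t : R) :
    v ⬝ᵥ Function.update x k t = v ⬝ᵥ Function.update x k 0 + v k * t := by
  rw [update_eq_update_zero_add_single, dotProduct_add, dotProduct_single]

lemma mulVec_update_zero_apply {A : Matrix n n R} {k : n} (hA : A k k = 0) (x : n → R) :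
    (A *ᵥ Function.update x k 0) k = (A *ᵥ x) k := by
  simp only [mulVec, dotProduct]
  refine Finset.sum_congr rfl fun j _ => ?_
  by_cases hj : j = k
  · simp [hj, hA]
  · simp [hj]

lemma update_dotProduct_mulVec_update {A : Matrix n n R} (hA : A.IsSymm) {k : n}
    (hAk : A k k = 0) (x : n → R) (t : R) :
    Function.update x k t ⬝ᵥ (A *ᵥ Function.update x k t)
      = Function.update x k 0 ⬝ᵥ (A *ᵥ Function.update x k 0) + 2 * t * (A *ᵥ x) k := by
  set y := Function.update x k 0
  have hyAs : y ⬝ᵥ (A *ᵥ Pi.single k t) = t * (A *ᵥ y) k := by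
    rw [dotProduct_mulVec, dotProduct_single, ← hA.eq, vecMul_transpose, hA.eq, mul_comm]
  have hsAs : Pi.single k t ⬝ᵥ (A *ᵥ Pi.single k t) = 0 := by
    simp [single_dotProduct, mulVec_single, hAk]
  rw [update_eq_update_zero_add_single, mulVec_add, dotProduct_add, add_dotProduct,
    add_dotProduct, hyAs, hsAs, single_dotProduct, mulVec_update_zero_apply hAk]
  ring

lemma mulVec_apply_sub_mulVec_apply (A : Matrix n n R) (k : n) {i : n} {u v : n → R}
    (huv : ∀ j, j ≠ i → u j = v j) :
    (A *ᵥ u) k - (A *ᵥ v) k = A k i * (u i - v i) := by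
  have hsub : u - v = Pi.single i (u i - v i) := by
    ext j
    by_cases hj : j = i
    · simp [hj]
    · simp [hj, huv j hj]
  rw [← Pi.sub_apply, ← mulVec_sub, hsub, mulVec_single]
  simp

end UpdateCoordinate

lemma condDist_div_const {I S : Type*} [Fintype I] [DecidableEq I] [Fintype S]
    (f : (I → S) → ℝ) {Z : ℝ} (hZ : Z ≠ 0) :
    condDist (fun x => f x / Z) = condDist f := by
  funext i x s
  simp only [condDist, ← Finset.sum_div, div_div_div_cancel_right₀ hZ]

lemma dobrushinC_le_of_tvDist_le {I S : Type*} [Fintype I] [DecidableEq I] [Fintype S]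
    (μ : (I → S) → ℝ) (i j : I) {c : ℝ} (hc : 0 ≤ c)
    (hμ : ∀ x y : I → S, (∀ k, k ≠ j → x k = y k) →
      tvDist (condDist μ i x) (condDist μ i y) ≤ c) :
    dobrushinC μ i j ≤ c / 2 := by
  have := Real.iSup_le (fun q : {q : (I → S) × (I → S) // ∀ k, k ≠ j → q.1 k = q.2 k} =>
    hμ q.1.1 q.1.2 q.2) hc
  rw [dobrushinC]
  linarith

section Ising

variable {V : Type*} (G : SimpleGraph V) [DecidableRel G.Adj] (J : V → V → ℝ) (h : V → ℝ)

def couplingMatrix : Matrix V V ℝ := Matrix.of fun i j => if G.Adj i j then J i j else 0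

variable {G J}

lemma couplingMatrix_isSymm (hJ : ∀ i j, J i j = J j i) : (couplingMatrix G J).IsSymm := by
  ext i j
  simp [couplingMatrix, G.adj_comm, hJ]

lemma couplingMatrix_self (k : V) : couplingMatrix G J k k = 0 := by
  simp [couplingMatrix]

variable (G J) [Fintype V]

lemma isingEnergy_eq (x : V → Spin) :
    isingEnergy G J h x
      = (1 / 2) * ((Spin.toReal ∘ x) ⬝ᵥ (couplingMatrix G J *ᵥ (Spin.toReal ∘ x)))
        + h ⬝ᵥ (Spin.toReal ∘ x) := by
  simp only [isingEnergy, dotProduct, mulVec, Finset.mul_sum, couplingMatrix, Function.comp,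
    Spin.toReal, of_apply]
  congr! 3 with i - j -
  split_ifs <;> ring

def localField (k : V) (x : V → Spin) : ℝ :=
  h k + (couplingMatrix G J *ᵥ (Spin.toReal ∘ x)) k

variable [DecidableEq V]

lemma exists_isingEnergy_update_eq (hJ : ∀ i j, J i j = J j i) (k : V) (x : V → Spin) :
    ∃ R, ∀ s : Spin,
      isingEnergy G J h (Function.update x k s) = R + s.toReal * localField G J h k x := by
  set y := Function.update (Spin.toReal ∘ x) k 0
  refine ⟨(1 / 2) * (y ⬝ᵥ (couplingMatrix G J *ᵥ y)) + h ⬝ᵥ y, fun s => ?_⟩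
  rw [isingEnergy_eq, Function.comp_update, dotProduct_update,
    update_dotProduct_mulVec_update (couplingMatrix_isSymm hJ) (couplingMatrix_self k), localField]
  ring

lemma condDist_isingMu (hJ : ∀ i j, J i j = J j i) (k : V) (x : V → Spin) (s : Spin) :
    condDist (isingMu G J h) k x s = (1 + s.toReal * tanh (localField G J h k x)) / 2 := by
  have hZ : ∑ y : V → Spin, exp (isingEnergy G J h y) ≠ 0 :=
    (Finset.sum_pos (fun y _ => exp_pos _) ⟨x, Finset.mem_univ x⟩).ne'
  obtain ⟨R, hR⟩ := exists_isingEnergy_update_eq G J h hJ k x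
  unfold isingMu
  rw [condDist_div_const _ hZ, condDist]
  simp only [hR]
  exact exp_div_sum_exp_spin R _ s

lemma tvDist_condDist_isingMu (hJ : ∀ i j, J i j = J j i) (k : V) (x y : V → Spin) :
    tvDist (condDist (isingMu G J h) k x) (condDist (isingMu G J h) k y)
      = |tanh (localField G J h k x) - tanh (localField G J h k y)| / 2 := by
  simp only [tvDist, condDist_isingMu G J h hJ]
  rw [Spin.sum_univ_toReal (fun t => |(1 + t * tanh (localField G J h k x)) / 2
    - (1 + t * tanh (localField G J h k y)) / 2|)]
  set a := tanh (localField G J h k x)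
  set b := tanh (localField G J h k y)
  rw [show (1 + -1 * a) / 2 - (1 + -1 * b) / 2 = -((a - b) / 2) by ring,
    show (1 + 1 * a) / 2 - (1 + 1 * b) / 2 = (a - b) / 2 by ring, abs_neg, abs_div, abs_two]
  ring

lemma tvDist_condDist_isingMu_le (hJ : ∀ i j, J i j = J j i) (k i : V) (x y : V → Spin)
    (hxy : ∀ j, j ≠ i → x j = y j) :
    tvDist (condDist (isingMu G J h) k x) (condDist (isingMu G J h) k y)
      ≤ tanh |couplingMatrix G J k i| := by
  have hdiff : |localField G J h k x - localField G J h k y| / 2 ≤ |couplingMatrix G J k i| := by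
    have hspin : |(x i).toReal - (y i).toReal| ≤ 2 := by
      linarith [abs_sub (x i).toReal (y i).toReal, (x i).abs_toReal, (y i).abs_toReal]
    rw [localField, localField, add_sub_add_left_eq_sub,
      mulVec_apply_sub_mulVec_apply (u := Spin.toReal ∘ x) (v := Spin.toReal ∘ y) _ k
        fun j hj => congrArg Spin.toReal (hxy j hj),
      abs_mul, Function.comp_apply, Function.comp_apply]
    linarith [mul_le_mul_of_nonneg_left hspin (abs_nonneg (couplingMatrix G J k i))]
  rw [tvDist_condDist_isingMu G J h hJ]
  linarith [abs_tanh_sub_tanh_le (localField G J h k x) (localField G J h k y),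
    tanh_monotone hdiff]

end Ising

theorem ising_dobrushin_condition {V : Type*} [Fintype V] [DecidableEq V] [Nonempty V]
    (G : SimpleGraph V) [DecidableRel G.Adj] (J : V → V → ℝ) (h : V → ℝ)
    (hJsymm : ∀ i j, J i j = J j i) :
    (∀ k i, G.Adj i k → dobrushinC (isingMu G J h) k i ≤ Real.tanh |J i k|) ∧
    (∀ (d : ℕ) (β : ℝ), (∀ v, G.degree v ≤ d) → (∀ i j, |J i j| ≤ β) →
      (d : ℝ) * Real.tanh β < 1 →
      (Finset.univ.sup' Finset.univ_nonempty fun k => ∑ i, dobrushinC (isingMu G J h) k i)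
        < 1) := by
  have hC : ∀ k i, dobrushinC (isingMu G J h) k i ≤ tanh |couplingMatrix G J k i| := fun k i =>
    (dobrushinC_le_of_tvDist_le _ k i (tanh_nonneg (abs_nonneg _))
      (tvDist_condDist_isingMu_le G J h hJsymm k i)).trans
      (half_le_self (tanh_nonneg (abs_nonneg _)))
  refine ⟨fun k i hik => ?_, fun d β hdeg hβ hdβ => ?_⟩
  · simpa [couplingMatrix, hik.symm, hJsymm k i] using hC k i
  obtain ⟨v⟩ := ‹Nonempty V›
  have hβ0 : 0 ≤ tanh β := tanh_nonneg ((abs_nonneg _).trans (hβ v v))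
  refine (Finset.sup'_lt_iff _).2 fun k _ => ?_
  calc ∑ i, dobrushinC (isingMu G J h) k i ≤ ∑ i, if G.Adj k i then tanh β else 0 := by
        refine Finset.sum_le_sum fun i _ => (hC k i).trans ?_
        by_cases hki : G.Adj k i
        · simpa [couplingMatrix, hki] using tanh_monotone (hβ k i)
        · simp [couplingMatrix, hki]
    _ = G.degree k * tanh β := by
        rw [← Finset.sum_filter, Finset.sum_const, ← SimpleGraph.neighborFinset_eq_filter,
          SimpleGraph.card_neighborFinset_eq_degree, nsmul_eq_mul]
    _ ≤ d * tanh β := by gcongr; exact hdeg k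
    _ < 1 := hdβ
end
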